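/- Let α : [0,1] → [0,1] be the piecewise linear map defined by α(x) = x/√2 for 0 ≤ x ≤ 2−√2 and α(x) = √2 x + (1−√2) for 2−√2 < x ≤ 1. Then for all k, n ≥ 1 and all distinct dyadic rationals s, s' ∈ {a/2^n : 0 ≤ a ≤ 2^n − 1}, the fractional parts of 2^k α(s) and 2^k α(s') are distinct. -/

import Mathlib

/-!
On rationals `α` takes values in `ℚ + ℚ√2`: `α(x) = (x/2)√2` on the left branch and
`α(x) = 1 + (x - 1)√2` on the right one. If `2^k α(s)` and `2^k α(s')` have the same fractional
part, their difference is an integer, so by irrationality of `√2` the `√2`-coefficients agree. On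
`[0, 1)` the coefficients `x/2 ∈ [0, 1/2)` and `x - 1 ∈ [-1, 0)` cannot collide across branches,
and within a branch they determine `x`.
-/

/-- The piecewise linear homeomorphism `α` of `[0,1]`. -/
noncomputable def alphaMap : ℝ → ℝ := fun x =>
  if x ≤ 2 - Real.sqrt 2 then x / Real.sqrt 2 else Real.sqrt 2 * x + (1 - Real.sqrt 2)

theorem Irrational.eq_zero_of_ratCast_add_mul_eq_ratCast {x : ℝ} (hx : Irrational x)
    {p q r : ℚ} (h : (p : ℝ) + q * x = r) : q = 0 := by
  by_contra hq
  exact ((hx.ratCast_mul hq).ratCast_add p).ne_rat r h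

theorem alphaMap_ratCast (x : ℚ) :
    ∃ p c : ℚ, (c = x / 2 ∨ c = x - 1) ∧ alphaMap x = p + c * Real.sqrt 2 := by
  have hsq : Real.sqrt 2 * Real.sqrt 2 = 2 := Real.mul_self_sqrt zero_le_two
  unfold alphaMap
  split_ifs
  · refine ⟨0, x / 2, .inl rfl, ?_⟩
    push_cast
    field_simp
    linear_combination (-(x : ℝ)) * hsq
  · exact ⟨1, x - 1, .inr rfl, by push_cast; ring⟩

theorem eq_of_half_or_sub_one_eq {K : Type*} [Field K] [LinearOrder K] [IsStrictOrderedRing K]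
    {x y c : K} (hx₀ : 0 ≤ x) (hx₁ : x < 1) (hy₀ : 0 ≤ y) (hy₁ : y < 1)
    (hcx : c = x / 2 ∨ c = x - 1) (hcy : c = y / 2 ∨ c = y - 1) : x = y := by
  rcases hcx with rfl | rfl <;> rcases hcy with h | h <;> linarith

theorem natCast_div_two_pow_lt_one {a n : ℕ} (ha : a ≤ 2 ^ n - 1) : (a : ℚ) / 2 ^ n < 1 := by
  have : a < 2 ^ n := by have := Nat.one_le_two_pow (n := n); omega
  exact (div_lt_one (by positivity)).2 (by exact_mod_cast this)

theorem stmt1_general (k n : ℕ) (a b : ℕ)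
    (ha : a ≤ 2 ^ n - 1) (hb : b ≤ 2 ^ n - 1) (hab : a ≠ b) :
    Int.fract ((2 : ℝ) ^ k * alphaMap ((a : ℝ) / 2 ^ n)) ≠
      Int.fract ((2 : ℝ) ^ k * alphaMap ((b : ℝ) / 2 ^ n)) := by
  intro h
  obtain ⟨z, hz⟩ := Int.fract_eq_fract.1 h
  obtain ⟨p, c, hc, hαa⟩ := alphaMap_ratCast ((a : ℚ) / 2 ^ n)
  obtain ⟨p', c', hc', hαb⟩ := alphaMap_ratCast ((b : ℚ) / 2 ^ n)
  push_cast at hαa hαb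
  rw [hαa, hαb] at hz
  have hcoeff : (2 : ℚ) ^ k * (c - c') = 0 :=
    irrational_sqrt_two.eq_zero_of_ratCast_add_mul_eq_ratCast
      (p := 2 ^ k * (p - p') - z) (r := 0) (by push_cast; linear_combination hz)
  have hcc' : c = c' := by
    simpa [sub_eq_zero] using hcoeff
  subst hcc'
  have hdiv := eq_of_half_or_sub_one_eq (by positivity) (natCast_div_two_pow_lt_one ha)
    (by positivity) (natCast_div_two_pow_lt_one hb) hc hc'
  exact hab (by exact_mod_cast (div_left_inj' (by positivity)).1 hdiv)

theorem stmt1 (k n : ℕ) (hk : 1 ≤ k) (hn : 1 ≤ n) (a b : ℕ)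
    (ha : a ≤ 2 ^ n - 1) (hb : b ≤ 2 ^ n - 1) (hab : a ≠ b) :
    Int.fract ((2 : ℝ) ^ k * alphaMap ((a : ℝ) / 2 ^ n)) ≠
      Int.fract ((2 : ℝ) ^ k * alphaMap ((b : ℝ) / 2 ^ n)) :=
  stmt1_general k n a b ha hb hab
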